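/- arXiv:1312.6057 — 4 statements merged into one kernel-verified Lean document; each statement's English description precedes it below -/
import Mathlib

section
/- Let A > 0, B = log(1/(1−p_e)) > 0, and let F : [0,π] → ℝ be twice differentiable with density f = F' satisfying F > 0, f > 0, f' ≤ 0 on an interval (x_l, x_u). Define TC(x) = (A/x²)(2 log F(x) + B) − A·C with C ≥ 0 constant. Then at every stationary point x* ∈ (x_l, x_u) of TC, the second derivative TC''(x*) is strictly negative. -/
/-! Write `TC = A h / x² - c` with `h = 2 log F + B`, so `TC' = (x h' - 2 h) · A / x³`.
At a stationary point the factor `x h' - 2 h` vanishes, hence `TC'' = (x h'' - h') · A / x³`.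
Since `h' = 2 f / F > 0` and `h'' = 2 (f' F - f²) / F² ≤ 0`, this is negative. -/

open Set Filter Topology

theorem hasDerivAt_mul_of_apply_eq_zero {u v : ℝ → ℝ} {u' v' x : ℝ}
    (hu : HasDerivAt u u' x) (hv : HasDerivAt v v' x) (hux : u x = 0) :
    HasDerivAt (fun y => u y * v y) (u' * v x) x := by
  simpa [hux] using hu.fun_mul hv

section DivSq

variable {A c x : ℝ} {h : ℝ → ℝ}

theorem hasDerivAt_div_sq_mul_sub {d : ℝ} (hh : HasDerivAt h d x) (hx : x ≠ 0) :
    HasDerivAt (fun y => A / y ^ 2 * h y - c) ((x * d - 2 * h x) * (A / x ^ 3)) x := by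
  have hinv : HasDerivAt (fun y => A / y ^ 2) ((0 * x ^ 2 - A * (2 * x)) / (x ^ 2) ^ 2) x := by
    simpa using (hasDerivAt_const x A).fun_div (hasDerivAt_pow 2 x) (pow_ne_zero 2 hx)
  refine ((hinv.mul hh).sub_const c).congr_deriv ?_
  field_simp
  ring

theorem hasDerivAt_deriv_div_sq_mul_sub_of_stationary {h' : ℝ → ℝ} {h'' : ℝ}
    (hh : ∀ᶠ y in 𝓝 x, HasDerivAt h (h' y) y) (hh' : HasDerivAt h' h'' x) (hx : x ≠ 0)
    (hstat : x * h' x - 2 * h x = 0) :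
    HasDerivAt (deriv fun y => A / y ^ 2 * h y - c) ((x * h'' - h' x) * (A / x ^ 3)) x := by
  have hderiv : (deriv fun y => A / y ^ 2 * h y - c) =ᶠ[𝓝 x]
      fun y => (y * h' y - 2 * h y) * (A / y ^ 3) := by
    filter_upwards [hh, eventually_ne_nhds hx] with y hy hy0
    exact (hasDerivAt_div_sq_mul_sub hy hy0).deriv
  have hu : HasDerivAt (fun y => y * h' y - 2 * h y) (1 * h' x + x * h'' - 2 * h' x) x :=
    ((hasDerivAt_id x).mul hh').sub (hh.self_of_nhds.const_mul 2)
  have hv : HasDerivAt (fun y => A / y ^ 3) ((0 * x ^ 3 - A * (3 * x ^ 2)) / (x ^ 3) ^ 2) x := by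
    simpa using (hasDerivAt_const x A).fun_div (hasDerivAt_pow 3 x) (pow_ne_zero 3 hx)
  refine ((hasDerivAt_mul_of_apply_eq_zero hu hv hstat).congr_of_eventuallyEq hderiv).congr_deriv ?_
  ring

theorem deriv_deriv_div_sq_mul_sub_neg {h' : ℝ → ℝ} {h'' : ℝ} (hA : 0 < A) (hx : 0 < x)
    (hh : ∀ᶠ y in 𝓝 x, HasDerivAt h (h' y) y) (hh' : HasDerivAt h' h'' x)
    (hpos : 0 < h' x) (hconc : h'' ≤ 0)
    (hstat : deriv (fun y => A / y ^ 2 * h y - c) x = 0) :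
    deriv (deriv fun y => A / y ^ 2 * h y - c) x < 0 := by
  have hfactor : x * h' x - 2 * h x = 0 := by
    rw [(hasDerivAt_div_sq_mul_sub hh.self_of_nhds hx.ne').deriv] at hstat
    exact (mul_eq_zero.mp hstat).resolve_right (by positivity)
  rw [(hasDerivAt_deriv_div_sq_mul_sub_of_stationary hh hh' hx.ne' hfactor).deriv]
  exact mul_neg_of_neg_of_pos (by nlinarith) (by positivity)

end DivSq

theorem stmt6_general (A B C x_l x_u : ℝ) (F f f' : ℝ → ℝ)
    (hA : 0 < A)
    (hxl : 0 < x_l)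
    (hF : ∀ x ∈ Ioo x_l x_u, HasDerivAt F (f x) x)
    (hf : ∀ x ∈ Ioo x_l x_u, HasDerivAt f (f' x) x)
    (hFpos : ∀ x ∈ Ioo x_l x_u, 0 < F x)
    (hfpos : ∀ x ∈ Ioo x_l x_u, 0 < f x)
    (hf'le : ∀ x ∈ Ioo x_l x_u, f' x ≤ 0) :
    ∀ x ∈ Ioo x_l x_u,
      deriv (fun x => (A / x ^ 2) * (2 * Real.log (F x) + B) - A * C) x = 0 →
      deriv (deriv (fun x => (A / x ^ 2) * (2 * Real.log (F x) + B) - A * C)) x < 0 := by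
  intro x hx hstat
  have hlog : ∀ᶠ y in 𝓝 x,
      HasDerivAt (fun y => 2 * Real.log (F y) + B) (2 * (f y / F y)) y := by
    filter_upwards [isOpen_Ioo.mem_nhds hx] with y hy
    exact (((hF y hy).log (hFpos y hy).ne').const_mul 2).add_const B
  have hlog' : HasDerivAt (fun y => 2 * (f y / F y))
      (2 * ((f' x * F x - f x * f x) / F x ^ 2)) x :=
    ((hf x hx).div (hF x hx) (hFpos x hx).ne').const_mul 2
  have hFx := hFpos x hx
  have hfx := hfpos x hx
  have hnum : f' x * F x - f x * f x ≤ 0 := by nlinarith [hf'le x hx]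
  exact deriv_deriv_div_sq_mul_sub_neg hA (hxl.trans hx.1) hlog hlog' (by positivity)
    (mul_nonpos_of_nonneg_of_nonpos zero_le_two (div_nonpos_of_nonpos_of_nonneg hnum (sq_nonneg _)))
    hstat

theorem stmt6 (A B C p_e x_l x_u : ℝ) (F f f' : ℝ → ℝ)
    (hA : 0 < A) (hC : 0 ≤ C) (hpe : 0 < p_e ∧ p_e < 1)
    (hB : B = Real.log (1 / (1 - p_e)))
    (hxl : 0 < x_l) (hxlu : x_l < x_u)
    (hF : ∀ x ∈ Ioo x_l x_u, HasDerivAt F (f x) x)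
    (hf : ∀ x ∈ Ioo x_l x_u, HasDerivAt f (f' x) x)
    (hFpos : ∀ x ∈ Ioo x_l x_u, 0 < F x)
    (hfpos : ∀ x ∈ Ioo x_l x_u, 0 < f x)
    (hf'le : ∀ x ∈ Ioo x_l x_u, f' x ≤ 0) :
    ∀ x ∈ Ioo x_l x_u,
      deriv (fun x => (A / x ^ 2) * (2 * Real.log (F x) + B) - A * C) x = 0 →
      deriv (deriv (fun x => (A / x ^ 2) * (2 * Real.log (F x) + B) - A * C)) x < 0 :=
  stmt6_general A B C x_l x_u F f f' hA hxl hF hf hFpos hfpos hf'le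
end

section
/- Let F be a concave, twice-differentiable error c.d.f. on [0, ε_max] with F(ε_max) = 1, density f, and let B = log(1/(1−p_e)) with 0 < p_e < 1. If f(ε_max) ≥ B/ε_max, then the transmission capacity TC(x) = (A/x²)(2 log F(x) + B) − AC (A > 0, C ≥ 0) attains its maximum over (F⁻¹(√(1−p_e)), ε_max] at x* = ε_max. -/
/-!
Concavity puts `F` below its tangent at `ε_max`, so `F x ≤ 1 - f(ε_max) (ε_max - x)`, and with
`log y ≤ y - 1` and the edge condition `f(ε_max) ≥ B / ε_max` this gives
`2 log F(x) + B ≤ B - 2 B (ε_max - x) / ε_max`. The right-hand side falls short of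
`B x² / ε_max²` by exactly `B (ε_max - x)² / ε_max²`, so `TC(x) ≤ A B / ε_max² - A C = TC(ε_max)`.
-/

open Real Set

lemma ConcaveOn.le_add_mul_sub_of_hasDerivAt {S : Set ℝ} {f : ℝ → ℝ} {f' x y : ℝ}
    (hfc : ConcaveOn ℝ S f) (hx : x ∈ S) (hy : y ∈ S) (hf' : HasDerivAt f f' y) :
    f x ≤ f y + f' * (x - y) := by
  rcases lt_trichotomy x y with hxy | rfl | hyx
  · have hslope := hfc.le_slope_of_hasDerivAt hx hy hxy hf'
    rw [slope_def_field, le_div_iff₀ (sub_pos.2 hxy)] at hslope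
    linarith
  · simp
  · have hslope := hfc.slope_le_of_hasDerivAt hy hx hyx hf'
    rw [slope_def_field, div_le_iff₀ (sub_pos.2 hyx)] at hslope
    linarith

lemma two_mul_log_add_le_of_le_one_sub {B ε x y : ℝ} (hB : 0 ≤ B) (hε : 0 < ε) (hy : 0 < y)
    (hyx : y ≤ 1 - B / ε * (ε - x)) :
    2 * log y + B ≤ B * x ^ 2 / ε ^ 2 := by
  have hlog : log y ≤ -(B / ε * (ε - x)) := by linarith [log_le_sub_one_of_pos hy]
  have hgap : B * x ^ 2 / ε ^ 2 - (B - 2 * (B / ε * (ε - x))) = B * (ε - x) ^ 2 / ε ^ 2 := by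
    field_simp
    ring
  have : 0 ≤ B * (ε - x) ^ 2 / ε ^ 2 := by positivity
  linarith

noncomputable def transmissionCapacity (A B C : ℝ) (F : ℝ → ℝ) (x : ℝ) : ℝ :=
  A / x ^ 2 * (2 * log (F x) + B) - A * C

lemma transmissionCapacity_le_of_two_mul_log_add_le {A B C ε x : ℝ} {F : ℝ → ℝ} (hA : 0 ≤ A)
    (hx : x ≠ 0) (hε : ε ≠ 0) (hFε : F ε = 1) (hlog : 2 * log (F x) + B ≤ B * x ^ 2 / ε ^ 2) :
    transmissionCapacity A B C F x ≤ transmissionCapacity A B C F ε := by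
  have hmul : A / x ^ 2 * (2 * log (F x) + B) ≤ A / x ^ 2 * (B * x ^ 2 / ε ^ 2) :=
    mul_le_mul_of_nonneg_left hlog (by positivity)
  have hrhs : A / x ^ 2 * (B * x ^ 2 / ε ^ 2) = A / ε ^ 2 * (2 * log (F ε) + B) := by
    rw [hFε, log_one]
    field_simp
    ring
  unfold transmissionCapacity
  linarith

theorem stmt9_general (A B C p_e epsmax x_l : ℝ) (F f : ℝ → ℝ)
    (hA : 0 < A) (hpe : 0 < p_e ∧ p_e < 1)
    (hB : B = Real.log (1 / (1 - p_e)))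
    (heps : 0 < epsmax)
    (hconc : ConcaveOn ℝ (Icc 0 epsmax) F)
    (hF : ∀ x ∈ Ioc 0 epsmax, HasDerivAt F (f x) x)
    (hFmax : F epsmax = 1)
    (hxl : x_l ∈ Ioo 0 epsmax) (hFxl : F x_l = Real.sqrt (1 - p_e))
    (hedge : B / epsmax ≤ f epsmax) :
    ∀ x ∈ Ioc x_l epsmax,
      (A / x ^ 2) * (2 * Real.log (F x) + B) - A * C ≤
      (A / epsmax ^ 2) * (2 * Real.log (F epsmax) + B) - A * C := by
  intro x hx
  have hx0 : 0 < x := hxl.1.trans hx.1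
  have hB0 : 0 ≤ B := hB ▸ log_nonneg (one_le_one_div (by linarith) (by linarith))
  have hxl_mem : x_l ∈ Icc 0 epsmax := Ioo_subset_Icc_self hxl
  have heps_mem : epsmax ∈ Icc 0 epsmax := right_mem_Icc.2 heps.le
  have hFx_pos : 0 < F x := by
    have hmin : 0 < min (F x_l) (F epsmax) := by
      rw [hFxl, hFmax]
      exact lt_min (sqrt_pos.2 (by linarith)) one_pos
    exact hmin.trans_le (hconc.min_le_of_mem_Icc hxl_mem heps_mem ⟨hx.1.le, hx.2⟩)
  have hFx_le : F x ≤ 1 - B / epsmax * (epsmax - x) := by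
    have htangent := hconc.le_add_mul_sub_of_hasDerivAt ⟨hx0.le, hx.2⟩ heps_mem
      (hF epsmax ⟨heps, le_rfl⟩)
    have hslope := mul_le_mul_of_nonpos_right hedge (sub_nonpos.2 hx.2)
    rw [hFmax] at htangent
    linarith
  exact transmissionCapacity_le_of_two_mul_log_add_le hA.le hx0.ne' heps.ne' hFmax
    (two_mul_log_add_le_of_le_one_sub hB0 heps hFx_pos hFx_le)

theorem stmt9 (A B C p_e epsmax x_l : ℝ) (F f f' : ℝ → ℝ)
    (hA : 0 < A) (hC : 0 ≤ C) (hpe : 0 < p_e ∧ p_e < 1)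
    (hB : B = Real.log (1 / (1 - p_e)))
    (heps : 0 < epsmax) (hepspi : epsmax ≤ π)
    (hconc : ConcaveOn ℝ (Icc 0 epsmax) F)
    (hF : ∀ x ∈ Ioc 0 epsmax, HasDerivAt F (f x) x)
    (hf : ∀ x ∈ Ioo 0 epsmax, HasDerivAt f (f' x) x)
    (hFmax : F epsmax = 1)
    (hxl : x_l ∈ Ioo 0 epsmax) (hFxl : F x_l = Real.sqrt (1 - p_e))
    (hedge : B / epsmax ≤ f epsmax) :
    ∀ x ∈ Ioc x_l epsmax,
      (A / x ^ 2) * (2 * Real.log (F x) + B) - A * C ≤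
      (A / epsmax ^ 2) * (2 * Real.log (F epsmax) + B) - A * C :=
  stmt9_general A B C p_e epsmax x_l F f hA hpe hB heps hconc hF hFmax hxl hFxl hedge
end

section
/- Let F be a concave twice-differentiable error c.d.f. on [0, ε_max], f = F', B = log(1/(1−p_e)). If f(ε_max) < B/ε_max, then the unique maximizer x* of TC(x) = (A/x²)(2 log F(x) + B) − AC over (F⁻¹(√(1−p_e)), ε_max) satisfies the equation f(x*)/F(x*) = (1/x*)·log(F(x*)²/(1−p_e)). -/
/-!
Writing `G = 2 log F + B`, which vanishes at `x_l` and is positive to its right by concavity,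
`TC = A G / x² - A C` has derivative `2A/x³ · (x f/F - 2 log F - B)`. The condition on `f(ε_max)`
makes this negative at `ε_max`, so the maximum over `[x_l, ε_max]` is interior and is a critical
point. At a critical point `x f/F = G > 0`, hence `f > 0`, and on the set where `f > 0` the tangent
and secant inequalities of the concave `F` make `x f/F - 2 log F` strictly decreasing, so there is
only one critical point.
-/

open Real Set

/-- Critical points of `transmissionCapacity A B C F` are the points where this equals `B`. -/
noncomputable def elasticityGap (F f : ℝ → ℝ) (x : ℝ) : ℝ :=
  x * (f x / F x) - 2 * log (F x)

theorem ConcaveOn.left_lt_of_mem_Ioo {F : ℝ → ℝ} {a b x : ℝ} (hF : ConcaveOn ℝ (Icc a b) F)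
    (hab : F a < F b) (hx : x ∈ Ioo a b) : F a < F x := by
  have hlt : a < b := hx.1.trans hx.2
  rcases lt_or_ge (F x) (F b) with hxb | hbx
  · refine hF.left_lt_of_lt_right (left_mem_Icc.2 hlt.le) (right_mem_Icc.2 hlt.le) ?_ hxb
    rwa [openSegment_eq_Ioo hlt]
  · exact hab.trans_le hbx

theorem ConcaveOn.strictAntiOn_elasticityGap {F f : ℝ → ℝ} {s : Set ℝ} (hF : ConcaveOn ℝ s F)
    (hs : s ⊆ Ici 0) (hderiv : ∀ x ∈ s, HasDerivAt F (f x) x) (hpos : ∀ x ∈ s, 0 < F x) :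
    StrictAntiOn (elasticityGap F f) {x ∈ s | 0 < f x} := by
  rintro a ⟨ha, -⟩ b ⟨hb, hfb⟩ hab
  have hba : 0 < b - a := sub_pos.2 hab
  have hFa := hpos a ha
  have hFb := hpos b hb
  have hsecant_b := hF.le_slope_of_hasDerivAt ha hb hab (hderiv b hb)
  have hsecant_a := hF.slope_le_of_hasDerivAt ha hb hab (hderiv a ha)
  rw [slope_def_field, le_div_iff₀ hba] at hsecant_b
  rw [slope_def_field, div_le_iff₀ hba] at hsecant_a
  have hFab : F a ≤ F b := by nlinarith
  have hratio : f b / F b ≤ f a / F a :=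
    div_le_div₀ (by nlinarith) (by nlinarith) hFa hFab
  have hlog : (b - a) * (f b / F b) ≤ log (F b) - log (F a) :=
    calc (b - a) * (f b / F b) ≤ 1 - (F b / F a)⁻¹ := by
          rw [inv_div, ← div_self hFb.ne', ← sub_div, mul_div_assoc']
          gcongr
          linarith
      _ ≤ log (F b / F a) := one_sub_inv_le_log_of_pos (div_pos hFb hFa)
      _ = log (F b) - log (F a) := log_div hFb.ne' hFa.ne'
  have ha0 : a * (f b / F b) ≤ a * (f a / F a) := mul_le_mul_of_nonneg_left hratio (hs ha)
  have hgap : 0 < (b - a) * (f b / F b) := mul_pos hba (div_pos hfb hFb)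
  unfold elasticityGap
  nlinarith

theorem hasDerivAt_transmissionCapacity {A B C x : ℝ} {F f : ℝ → ℝ} (hx : x ≠ 0)
    (hFx : 0 < F x) (hF : HasDerivAt F (f x) x) :
    HasDerivAt (transmissionCapacity A B C F) (2 * A / x ^ 3 * (elasticityGap F f x - B)) x := by
  have hpow : HasDerivAt (fun y : ℝ => y ^ 2) (2 * x) x := by
    simpa using hasDerivAt_pow 2 x
  have hcoef : HasDerivAt (fun y : ℝ => A / y ^ 2) ((0 * x ^ 2 - A * (2 * x)) / (x ^ 2) ^ 2) x :=
    (hasDerivAt_const x A).div hpow (pow_ne_zero 2 hx)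
  have hG := ((hF.log hFx.ne').const_mul 2).add_const B
  refine ((hcoef.mul hG).sub_const (A * C)).congr_deriv ?_
  unfold elasticityGap
  field_simp
  ring

theorem elasticityGap_eq_of_isMaxOn {A B C y : ℝ} {F f : ℝ → ℝ} {s : Set ℝ} (hA : A ≠ 0)
    (hy : y ≠ 0) (hFy : 0 < F y) (hF : HasDerivAt F (f y) y) (hs : s ∈ nhds y)
    (hmax : IsMaxOn (transmissionCapacity A B C F) s y) : elasticityGap F f y = B := by
  have h := (hmax.isLocalMax hs).hasDerivAt_eq_zero (hasDerivAt_transmissionCapacity hy hFy hF)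
  have hcoef : 2 * A / y ^ 3 ≠ 0 := by positivity
  exact sub_eq_zero.1 ((mul_eq_zero.1 h).resolve_left hcoef)

theorem exists_mem_Ioo_isMaxOn_Icc {g : ℝ → ℝ} {a b c g' : ℝ} (hg : ContinuousOn g (Icc a b))
    (hc : c ∈ Ioo a b) (hac : g a < g c) (hb : HasDerivAt g g' b) (hg' : g' < 0) :
    ∃ x ∈ Ioo a b, IsMaxOn g (Icc a b) x := by
  have hab : a ≤ b := (hc.1.trans hc.2).le
  obtain ⟨x, hx, hmax⟩ := isCompact_Icc.exists_isMaxOn (nonempty_Icc.2 hab) hg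
  refine ⟨x, ⟨hx.1.lt_of_ne ?_, hx.2.lt_of_ne ?_⟩, hmax⟩
  · rintro rfl
    exact (hac.trans_le (hmax (Ioo_subset_Icc_self hc))).false
  · rintro rfl
    have hcone : a - x ∈ posTangentConeAt (Icc a x) x :=
      sub_mem_posTangentConeAt_of_segment_subset (segment_symm ℝ x a ▸ segment_subset_Icc hab)
    have h := hmax.localize.hasFDerivWithinAt_nonpos hb.hasFDerivAt.hasFDerivWithinAt hcone
    rw [ContinuousLinearMap.toSpanSingleton_apply, smul_eq_mul] at h
    nlinarith [hc.1, hc.2]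

theorem ConcaveOn.two_mul_log_add_pos {F : ℝ → ℝ} {a b x B : ℝ}
    (hF : ConcaveOn ℝ (Icc a b) F) (hFa : 0 < F a) (hFab : F a < F b)
    (hGa : 2 * log (F a) + B = 0) (hx : x ∈ Ioo a b) : 0 < 2 * log (F x) + B := by
  have := log_lt_log hFa (hF.left_lt_of_mem_Ioo hFab hx)
  linarith

theorem transmissionCapacity_lt {A B C a x : ℝ} {F : ℝ → ℝ} (hA : 0 < A) (hx : x ≠ 0)
    (hGa : 2 * log (F a) + B = 0) (hGx : 0 < 2 * log (F x) + B) :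
    transmissionCapacity A B C F a < transmissionCapacity A B C F x := by
  unfold transmissionCapacity
  rw [hGa, mul_zero]
  have : 0 < A / x ^ 2 := by positivity
  nlinarith

theorem pos_of_elasticityGap_eq {B x : ℝ} {F f : ℝ → ℝ} (hx : 0 < x) (hFx : 0 < F x)
    (hgap : elasticityGap F f x = B) (hGx : 0 < 2 * log (F x) + B) : 0 < f x := by
  have : 0 < x * (f x / F x) := by
    unfold elasticityGap at hgap
    linarith
  exact (div_pos_iff_of_pos_right hFx).1 (pos_of_mul_pos_right this hx.le)

theorem exists_isMaxOn_transmissionCapacity_and_unique {A B C a b : ℝ} {F f : ℝ → ℝ}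
    (hA : 0 < A) (ha : 0 < a) (hab : a < b) (hconc : ConcaveOn ℝ (Icc a b) F)
    (hF : ∀ x ∈ Icc a b, HasDerivAt F (f x) x) (hFa : 0 < F a) (hFab : F a < F b)
    (hGa : 2 * log (F a) + B = 0) (hgap : elasticityGap F f b < B) :
    ∃ xs ∈ Ioo a b, IsMaxOn (transmissionCapacity A B C F) (Icc a b) xs ∧
      elasticityGap F f xs = B ∧
      ∀ y ∈ Ioo a b, IsMaxOn (transmissionCapacity A B C F) (Ioo a b) y → y = xs := by
  have hG := fun x (hx : x ∈ Ioo a b) => hconc.two_mul_log_add_pos hFa hFab hGa hx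
  have hFpos : ∀ x ∈ Icc a b, 0 < F x := fun x hx =>
    (lt_min hFa (hFa.trans hFab)).trans_le <| hconc.ge_on_segment (left_mem_Icc.2 hab.le)
      (right_mem_Icc.2 hab.le) (by rwa [segment_eq_Icc hab.le])
  have hderiv : ∀ x ∈ Icc a b, HasDerivAt (transmissionCapacity A B C F)
      (2 * A / x ^ 3 * (elasticityGap F f x - B)) x := fun x hx =>
    hasDerivAt_transmissionCapacity (ha.trans_le hx.1).ne' (hFpos x hx) (hF x hx)
  have hmid : (a + b) / 2 ∈ Ioo a b := ⟨by linarith, by linarith⟩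
  obtain ⟨xs, hxs, hmax⟩ := exists_mem_Ioo_isMaxOn_Icc
    (fun x hx => (hderiv x hx).continuousAt.continuousWithinAt) hmid
    (transmissionCapacity_lt hA (ha.trans hmid.1).ne' hGa (hG _ hmid))
    (hderiv b (right_mem_Icc.2 hab.le))
    (mul_neg_of_pos_of_neg (by have := ha.trans hab; positivity) (sub_neg.2 hgap))
  have hcrit : ∀ y ∈ Ioo a b, IsMaxOn (transmissionCapacity A B C F) (Ioo a b) y →
      y ∈ {x ∈ Ioo a b | 0 < f x} ∧ elasticityGap F f y = B := by
    intro y hy hymax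
    have hy0 : 0 < y := ha.trans hy.1
    have hFy := hFpos y (Ioo_subset_Icc_self hy)
    have hgapy := elasticityGap_eq_of_isMaxOn hA.ne' hy0.ne' hFy
      (hF y (Ioo_subset_Icc_self hy)) (isOpen_Ioo.mem_nhds hy) hymax
    exact ⟨⟨hy, pos_of_elasticityGap_eq hy0 hFy hgapy (hG y hy)⟩, hgapy⟩
  obtain ⟨hxs', hgapxs⟩ := hcrit xs hxs (hmax.on_subset Ioo_subset_Icc_self)
  refine ⟨xs, hxs, hmax, hgapxs, fun y hy hymax => ?_⟩
  obtain ⟨hy', hgapy⟩ := hcrit y hy hymax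
  have hanti := (hconc.subset Ioo_subset_Icc_self (convex_Ioo a b)).strictAntiOn_elasticityGap
    (fun x hx => (ha.trans hx.1).le) (fun x hx => hF x (Ioo_subset_Icc_self hx))
    (fun x hx => hFpos x (Ioo_subset_Icc_self hx))
  exact hanti.injOn hy' hxs' (hgapy.trans hgapxs.symm)

theorem stmt10_general (A B C p_e epsmax x_l : ℝ) (F f : ℝ → ℝ)
    (hA : 0 < A) (hpe : 0 < p_e ∧ p_e < 1)
    (hB : B = Real.log (1 / (1 - p_e)))
    (hconc : ConcaveOn ℝ (Icc 0 epsmax) F)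
    (hF : ∀ x ∈ Ioc 0 epsmax, HasDerivAt F (f x) x)
    (hFmax : F epsmax = 1)
    (hxl : x_l ∈ Ioo 0 epsmax) (hFxl : F x_l = Real.sqrt (1 - p_e))
    (hedge : f epsmax < B / epsmax) :
    ∃ xs ∈ Ioo x_l epsmax,
      (∀ x ∈ Ioo x_l epsmax,
        (A / x ^ 2) * (2 * Real.log (F x) + B) - A * C ≤
        (A / xs ^ 2) * (2 * Real.log (F xs) + B) - A * C) ∧
      f xs / F xs = (1 / xs) * Real.log (F xs ^ 2 / (1 - p_e)) ∧
      (∀ y ∈ Ioo x_l epsmax,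
        (∀ x ∈ Ioo x_l epsmax,
          (A / x ^ 2) * (2 * Real.log (F x) + B) - A * C ≤
          (A / y ^ 2) * (2 * Real.log (F y) + B) - A * C) → y = xs) := by
  obtain ⟨hxl0, hxle⟩ := hxl
  have hp : 0 < 1 - p_e := by linarith [hpe.2]
  have hB' : B = -log (1 - p_e) := by rw [hB, one_div, log_inv]
  have hconc' : ConcaveOn ℝ (Icc x_l epsmax) F :=
    hconc.subset (Icc_subset_Icc hxl0.le le_rfl) (convex_Icc _ _)
  have hFxl0 : 0 < F x_l := hFxl ▸ sqrt_pos.2 hp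
  have hFlt : F x_l < F epsmax := by
    rw [hFxl, hFmax, sqrt_lt' one_pos]
    linarith [hpe.1]
  have hgap : elasticityGap F f epsmax < B := by
    rw [elasticityGap, hFmax, log_one, div_one, mul_zero, sub_zero, mul_comm]
    exact (lt_div_iff₀ (hxl0.trans hxle)).1 hedge
  obtain ⟨xs, hxs, hmax, hgapxs, huniq⟩ := exists_isMaxOn_transmissionCapacity_and_unique (C := C)
    hA hxl0 hxle hconc' (fun x hx => hF x ⟨hxl0.trans_le hx.1, hx.2⟩) hFxl0 hFlt
    (by rw [hFxl, log_sqrt hp.le, hB']; ring) hgap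
  refine ⟨xs, hxs, fun x hx => hmax (Ioo_subset_Icc_self hx), ?_,
    fun y hy hymax => huniq y hy (isMaxOn_iff.2 hymax)⟩
  have hFxs : 0 < F xs := hFxl0.trans (hconc'.left_lt_of_mem_Ioo hFlt hxs)
  have hxs0 : 0 < xs := hxl0.trans hxs.1
  rw [log_div (pow_pos hFxs 2).ne' hp.ne', log_pow,
    show ((2 : ℕ) : ℝ) * log (F xs) - log (1 - p_e) = xs * (f xs / F xs) by
      unfold elasticityGap at hgapxs
      push_cast
      linarith]
  field_simp

theorem stmt10 (A B C p_e epsmax x_l : ℝ) (F f f' : ℝ → ℝ)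
    (hA : 0 < A) (hC : 0 ≤ C) (hpe : 0 < p_e ∧ p_e < 1)
    (hB : B = Real.log (1 / (1 - p_e)))
    (heps : 0 < epsmax) (hepspi : epsmax ≤ π)
    (hconc : ConcaveOn ℝ (Icc 0 epsmax) F)
    (hF : ∀ x ∈ Ioc 0 epsmax, HasDerivAt F (f x) x)
    (hf : ∀ x ∈ Ioo 0 epsmax, HasDerivAt f (f' x) x)
    (hFmax : F epsmax = 1)
    (hxl : x_l ∈ Ioo 0 epsmax) (hFxl : F x_l = Real.sqrt (1 - p_e))
    (hedge : f epsmax < B / epsmax) :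
    ∃ xs ∈ Ioo x_l epsmax,
      (∀ x ∈ Ioo x_l epsmax,
        (A / x ^ 2) * (2 * Real.log (F x) + B) - A * C ≤
        (A / xs ^ 2) * (2 * Real.log (F xs) + B) - A * C) ∧
      f xs / F xs = (1 / xs) * Real.log (F xs ^ 2 / (1 - p_e)) ∧
      (∀ y ∈ Ioo x_l epsmax,
        (∀ x ∈ Ioo x_l epsmax,
          (A / x ^ 2) * (2 * Real.log (F x) + B) - A * C ≤
          (A / y ^ 2) * (2 * Real.log (F y) + B) - A * C) → y = xs) :=
  stmt10_general A B C p_e epsmax x_l F f hA hpe hB hconc hF hFmax hxl hFxl hedge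
end

section
/- Let F be defined piecewise on [0,π] by F(x) = b(1 − e^{−c₁x})/(1 − e^{−c₁a}) for 0 ≤ x ≤ a and F(x) = b + (1−b)(1 − e^{−c₂(x−a)})/(1 − e^{−c₂(π−a)}) for a < x ≤ π, with a = 1/2, b = 1/2, c₁ = 15, c₂ = 1. Then F is not concave on [0,π], but x·F'(x)/F(x) ≤ 1 holds for all x ∈ (0,π) where F is differentiable. -/
/-!
On `[0, a]` the ratio `x F'(x) / F(x)` equals `t e^{-t} / (1 - e^{-t})` with `t = c₁ x`, which is at
most `1` because `1 + t ≤ e^t`. This covers the kink `x = a` too: there `F` coincides with the left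
piece on `(-∞, a]`, so a derivative, if it exists, is the left one. On `(a, π]`, with
`D₂ = 1 - e^{-c₂(π - a)}`,
`D₂ (F - x F') = (b D₂ - c₂ a (1 - b)) + (1 - b) ((c₂ a + 1) - (c₂ x + 1) e^{-c₂ (x - a)})`,
and the second summand is nonnegative by `1 + t ≤ e^t` again, so the bound holds as soon as
`c₂ a (1 - b) ≤ b D₂`; for the given constants this is `D₂ ≥ 1/2`.

Concavity fails at the midpoint `a` of `2/5` and `3/5`: the steep left piece is already close to
`b = F(a)` at `2/5`, while the right piece is above `b` at `3/5`.
-/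

open Real Set

noncomputable def dimpleCDF (a b c₁ c₂ : ℝ) (x : ℝ) : ℝ :=
  if x ≤ a then b * (1 - exp (-c₁ * x)) / (1 - exp (-c₁ * a))
  else b + (1 - b) * (1 - exp (-c₂ * (x - a))) / (1 - exp (-c₂ * (π - a)))

lemma add_one_mul_exp_neg_le_one (t : ℝ) : (t + 1) * exp (-t) ≤ 1 := by
  calc (t + 1) * exp (-t) ≤ exp t * exp (-t) := by gcongr; exact add_one_le_exp t
    _ = 1 := by rw [← exp_add, add_neg_cancel, exp_zero]

lemma mul_exp_neg_le_one_sub_exp_neg (t : ℝ) : t * exp (-t) ≤ 1 - exp (-t) := by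
  linarith [add_one_mul_exp_neg_le_one t]

lemma mul_add_one_mul_exp_neg_le {a c x : ℝ} (ha : 0 ≤ a) (hc : 0 ≤ c) (hx : a ≤ x) :
    (c * x + 1) * exp (-c * (x - a)) ≤ c * a + 1 := by
  set t := c * (x - a) with ht
  have ht₀ : 0 ≤ t := mul_nonneg hc (sub_nonneg.2 hx)
  have hlin : c * x + 1 ≤ (c * a + 1) * (t + 1) := by nlinarith [mul_nonneg (mul_nonneg hc ha) ht₀]
  calc (c * x + 1) * exp (-c * (x - a)) ≤ (c * a + 1) * (t + 1) * exp (-t) := by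
        rw [neg_mul, ← ht]; gcongr
    _ ≤ c * a + 1 := by
        rw [mul_assoc]
        exact mul_le_of_le_one_right (by positivity) (add_one_mul_exp_neg_le_one t)

lemma exp_neg_le_inv_add_one {t : ℝ} (ht : 0 ≤ t) : exp (-t) ≤ (t + 1)⁻¹ := by
  rw [le_inv_comm₀ (exp_pos _) (by linarith), ← exp_neg, neg_neg]
  exact add_one_le_exp t

lemma one_sub_exp_neg_mul_pos {c y : ℝ} (hc : 0 < c) (hy : 0 < y) : 0 < 1 - exp (-c * y) := by
  have : exp (-c * y) < 1 := exp_lt_one_iff.2 (by nlinarith)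
  linarith

lemma one_sub_exp_le_one (y : ℝ) : 1 - exp y ≤ 1 := by linarith [exp_pos y]

lemma hasDerivAt_one_sub_exp_neg_mul (c y : ℝ) :
    HasDerivAt (fun y => 1 - exp (-c * y)) (c * exp (-c * y)) y := by
  have h := ((hasDerivAt_id y).const_mul (-c)).exp.const_sub 1
  simp only [id, mul_one] at h
  exact h.congr_deriv (by ring)

section dimpleCDF

variable {a b c₁ c₂ x : ℝ}

lemma dimpleCDF_of_le (hx : x ≤ a) :
    dimpleCDF a b c₁ c₂ x = b * (1 - exp (-c₁ * x)) / (1 - exp (-c₁ * a)) := if_pos hx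

lemma dimpleCDF_of_lt (hx : a < x) :
    dimpleCDF a b c₁ c₂ x = b + (1 - b) * (1 - exp (-c₂ * (x - a))) / (1 - exp (-c₂ * (π - a))) :=
  if_neg hx.not_ge

lemma dimpleCDF_self (ha : 0 < a) (hc₁ : 0 < c₁) : dimpleCDF a b c₁ c₂ a = b := by
  rw [dimpleCDF_of_le le_rfl, mul_div_assoc, div_self (one_sub_exp_neg_mul_pos hc₁ ha).ne', mul_one]

lemma deriv_dimpleCDF_of_le (hx : x ≤ a) (hd : DifferentiableAt ℝ (dimpleCDF a b c₁ c₂) x) :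
    deriv (dimpleCDF a b c₁ c₂) x = b * (c₁ * exp (-c₁ * x)) / (1 - exp (-c₁ * a)) := by
  have h : HasDerivWithinAt (dimpleCDF a b c₁ c₂)
      (b * (c₁ * exp (-c₁ * x)) / (1 - exp (-c₁ * a))) (Iic x) x :=
    (((hasDerivAt_one_sub_exp_neg_mul c₁ x).const_mul b).div_const _).hasDerivWithinAt.congr
      (fun y hy => dimpleCDF_of_le (le_trans hy hx)) (dimpleCDF_of_le hx)
  rw [← hd.derivWithin (uniqueDiffWithinAt_Iic x), h.derivWithin (uniqueDiffWithinAt_Iic x)]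

lemma deriv_dimpleCDF_of_lt (hx : a < x) :
    deriv (dimpleCDF a b c₁ c₂) x =
      (1 - b) * (c₂ * exp (-c₂ * (x - a))) / (1 - exp (-c₂ * (π - a))) := by
  have h : HasDerivAt (fun y => b + (1 - b) * (1 - exp (-c₂ * (y - a))) / (1 - exp (-c₂ * (π - a))))
      ((1 - b) * (c₂ * exp (-c₂ * (x - a))) / (1 - exp (-c₂ * (π - a)))) x :=
    ((((hasDerivAt_one_sub_exp_neg_mul c₂ (x - a)).comp_sub_const x a).const_mul _).div_const
      _).const_add b
  refine (Filter.EventuallyEq.deriv_eq ?_).trans h.deriv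
  filter_upwards [Ioi_mem_nhds hx] with y hy using dimpleCDF_of_lt hy

lemma mul_deriv_div_dimpleCDF_le_one_of_le (ha : 0 < a) (hb : 0 < b) (hc₁ : 0 < c₁)
    (hx₀ : 0 < x) (hx : x ≤ a) (hd : DifferentiableAt ℝ (dimpleCDF a b c₁ c₂) x) :
    x * deriv (dimpleCDF a b c₁ c₂) x / dimpleCDF a b c₁ c₂ x ≤ 1 := by
  have hD := one_sub_exp_neg_mul_pos hc₁ ha
  have hF : 0 < dimpleCDF a b c₁ c₂ x := by
    rw [dimpleCDF_of_le hx]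
    have := one_sub_exp_neg_mul_pos hc₁ hx₀
    positivity
  rw [div_le_one hF, deriv_dimpleCDF_of_le hx hd, dimpleCDF_of_le hx]
  have key := mul_exp_neg_le_one_sub_exp_neg (c₁ * x)
  rw [← neg_mul] at key
  calc x * (b * (c₁ * exp (-c₁ * x)) / (1 - exp (-c₁ * a)))
      = b * (c₁ * x * exp (-c₁ * x)) / (1 - exp (-c₁ * a)) := by ring
    _ ≤ b * (1 - exp (-c₁ * x)) / (1 - exp (-c₁ * a)) := by gcongr

lemma mul_deriv_div_dimpleCDF_le_one_of_lt (ha : 0 ≤ a) (hb₀ : 0 < b) (hb₁ : b ≤ 1)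
    (hc₂ : 0 < c₂) (haπ : a < π) (hx : a < x)
    (hslope : c₂ * a * (1 - b) ≤ b * (1 - exp (-c₂ * (π - a)))) :
    x * deriv (dimpleCDF a b c₁ c₂) x / dimpleCDF a b c₁ c₂ x ≤ 1 := by
  have hD := one_sub_exp_neg_mul_pos hc₂ (sub_pos.2 haπ)
  have hN := one_sub_exp_neg_mul_pos hc₂ (sub_pos.2 hx)
  have hF : 0 < dimpleCDF a b c₁ c₂ x := by
    rw [dimpleCDF_of_lt hx]
    have : 0 ≤ 1 - b := sub_nonneg.2 hb₁
    positivity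
  rw [div_le_one hF, deriv_dimpleCDF_of_lt hx, dimpleCDF_of_lt hx]
  have key := mul_le_mul_of_nonneg_left (mul_add_one_mul_exp_neg_le ha hc₂.le hx.le)
    (sub_nonneg.2 hb₁)
  rw [← sub_nonneg] at key ⊢
  generalize 1 - exp (-c₂ * (π - a)) = D at hD hslope ⊢
  have : b + (1 - b) * (1 - exp (-c₂ * (x - a))) / D -
      x * ((1 - b) * (c₂ * exp (-c₂ * (x - a))) / D) =
      (b * D - c₂ * a * (1 - b) +
        ((1 - b) * (c₂ * a + 1) - (1 - b) * ((c₂ * x + 1) * exp (-c₂ * (x - a))))) / D := by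
    field_simp; ring
  rw [this]
  have := sub_nonneg.2 hslope
  positivity

lemma mul_one_sub_exp_le_dimpleCDF (ha : 0 < a) (hb : 0 ≤ b) (hc₁ : 0 < c₁) (hx₀ : 0 ≤ x)
    (hx : x ≤ a) : b * (1 - exp (-c₁ * x)) ≤ dimpleCDF a b c₁ c₂ x := by
  have : 0 ≤ 1 - exp (-c₁ * x) := sub_nonneg.2 (exp_le_one_iff.2 (by nlinarith))
  rw [dimpleCDF_of_le hx]
  exact le_div_self (by positivity) (one_sub_exp_neg_mul_pos hc₁ ha) (one_sub_exp_le_one _)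

lemma add_mul_one_sub_exp_le_dimpleCDF (hb : b ≤ 1) (hc₂ : 0 < c₂) (haπ : a < π) (hx : a < x) :
    b + (1 - b) * (1 - exp (-c₂ * (x - a))) ≤ dimpleCDF a b c₁ c₂ x := by
  have := one_sub_exp_neg_mul_pos hc₂ (sub_pos.2 hx)
  have : 0 ≤ 1 - b := sub_nonneg.2 hb
  rw [dimpleCDF_of_lt hx]
  gcongr
  exact le_div_self (by positivity) (one_sub_exp_neg_mul_pos hc₂ (sub_pos.2 haπ))
    (one_sub_exp_le_one _)

end dimpleCDF

lemma not_concaveOn_dimpleCDF : ¬ ConcaveOn ℝ (Icc 0 π) (dimpleCDF (1/2) (1/2) 15 1) := by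
  intro hconc
  have hπ := pi_gt_three
  have hmid := hconc.2 (show (2/5 : ℝ) ∈ Icc 0 π from ⟨by norm_num, by linarith⟩)
    (show (3/5 : ℝ) ∈ Icc 0 π from ⟨by norm_num, by linarith⟩)
    (show (0 : ℝ) ≤ 1/2 by norm_num) (show (0 : ℝ) ≤ 1/2 by norm_num) (by norm_num)
  simp only [smul_eq_mul] at hmid
  rw [show (1/2 : ℝ) * (2/5) + 1/2 * (3/5) = 1/2 by norm_num,
    dimpleCDF_self (by norm_num) (by norm_num)] at hmid
  have hleft := mul_one_sub_exp_le_dimpleCDF (a := 1/2) (b := 1/2) (c₂ := 1) (x := 2/5)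
    (by norm_num) (by norm_num) (by norm_num : (0 : ℝ) < 15) (by norm_num) (by norm_num)
  have hright := add_mul_one_sub_exp_le_dimpleCDF (a := 1/2) (b := 1/2) (c₁ := 15) (x := 3/5)
    (by norm_num) one_pos (by linarith) (by norm_num)
  have hexp₆ : exp (-15 * (2/5 : ℝ)) ≤ 1/16 := by
    have h₃ := exp_neg_le_inv_add_one (zero_le_three (α := ℝ))
    have h₃' := exp_pos (-3)
    rw [show -15 * (2/5 : ℝ) = -3 + -3 by norm_num, exp_add]
    nlinarith
  have hexp : exp (-1 * (3/5 - 1/2 : ℝ)) ≤ 10/11 := by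
    rw [show -1 * (3/5 - 1/2 : ℝ) = -(1/10) by norm_num]
    exact (exp_neg_le_inv_add_one (by norm_num)).trans_eq (by norm_num)
  linarith

theorem stmt11 :
    let a : ℝ := 1 / 2
    let b : ℝ := 1 / 2
    let c₁ : ℝ := 15
    let c₂ : ℝ := 1
    let F : ℝ → ℝ := fun x =>
      if x ≤ a then b * (1 - Real.exp (-c₁ * x)) / (1 - Real.exp (-c₁ * a))
      else b + (1 - b) * (1 - Real.exp (-c₂ * (x - a))) / (1 - Real.exp (-c₂ * (π - a)))
    ¬ ConcaveOn ℝ (Icc 0 π) F ∧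
    ∀ x ∈ Ioo (0 : ℝ) π, DifferentiableAt ℝ F x → x * deriv F x / F x ≤ 1 := by
  intro a b c₁ c₂ F
  change ¬ ConcaveOn ℝ (Icc 0 π) (dimpleCDF (1/2) (1/2) 15 1) ∧
    ∀ x ∈ Ioo (0 : ℝ) π, DifferentiableAt ℝ (dimpleCDF (1/2) (1/2) 15 1) x →
      x * deriv (dimpleCDF (1/2) (1/2) 15 1) x / dimpleCDF (1/2) (1/2) 15 1 x ≤ 1
  refine ⟨not_concaveOn_dimpleCDF, fun x ⟨hx₀, _⟩ hd => ?_⟩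
  have hπ := pi_gt_three
  rcases le_or_gt x (1/2) with hxa | hxa
  · exact mul_deriv_div_dimpleCDF_le_one_of_le (by norm_num) (by norm_num) (by norm_num) hx₀ hxa hd
  · refine mul_deriv_div_dimpleCDF_le_one_of_lt (by norm_num) (by norm_num) (by norm_num) one_pos
      (by linarith) hxa ?_
    have hexp := exp_neg_le_inv_add_one (t := π - 1/2) (by linarith)
    have : (π - 1/2 + 1)⁻¹ ≤ 1/2 := by rw [inv_le_comm₀ (by linarith) (by norm_num)]; linarith
    rw [neg_one_mul]
    linarith
end
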